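/- arXiv:1712.09539 — 16 statements merged into one kernel-verified Lean document; each statement's English description precedes it below -/
import Mathlib

section
/- Let (A,⋄,∘,λ) be a left semi-truss in which (A,⋄) is a left cancellative semigroup. Then for all a,b,c ∈ A, λ(a∘b, c) = λ(a, λ(b,c)). -/
/-- In a left semi-truss `(A, ⋄, ∘, λ)` with `(A, ⋄)` a left
cancellative semigroup, `λ(a∘b, c) = λ(a, λ(b, c))`. -/
theorem semiTruss_lambda_action {A : Type*} (dia cir : A → A → A) (lam : A → A → A)
    (hdia_assoc : ∀ a b c : A, dia (dia a b) c = dia a (dia b c))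
    (hcir_assoc : ∀ a b c : A, cir (cir a b) c = cir a (cir b c))
    (hcanc : ∀ a b c : A, dia a b = dia a c → b = c)
    (hlaw : ∀ a b c : A, cir a (dia b c) = dia (cir a b) (lam a c)) :
    ∀ a b c : A, lam (cir a b) c = lam a (lam b c) := by
  intro a b c
  apply hcanc (cir (cir a b) b)
  calc dia (cir (cir a b) b) (lam (cir a b) c)
      = cir (cir a b) (dia b c) := (hlaw _ _ _).symm
    _ = cir a (cir b (dia b c)) := hcir_assoc _ _ _
    _ = cir a (dia (cir b b) (lam b c)) := by rw [hlaw]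
    _ = dia (cir a (cir b b)) (lam a (lam b c)) := hlaw _ _ _
    _ = dia (cir (cir a b) b) (lam a (lam b c)) := by rw [hcir_assoc]
end

section
/- Let (A,⋄,∘,λ) be a left semi-truss in which (A,⋄) is a left cancellative semigroup. Then for all a,b,c ∈ A, λ(a, b⋄c) = λ(a,b) ⋄ λ(a,c). -/
/-- In a left semi-truss `(A, ⋄, ∘, λ)` with `(A, ⋄)` a left
cancellative semigroup, `λ(a, b⋄c) = λ(a,b) ⋄ λ(a,c)`. -/
theorem semiTruss_lambda_endo {A : Type*} (dia cir : A → A → A) (lam : A → A → A)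
    (hdia_assoc : ∀ a b c : A, dia (dia a b) c = dia a (dia b c))
    (hcir_assoc : ∀ a b c : A, cir (cir a b) c = cir a (cir b c))
    (hcanc : ∀ a b c : A, dia a b = dia a c → b = c)
    (hlaw : ∀ a b c : A, cir a (dia b c) = dia (cir a b) (lam a c)) :
    ∀ a b c : A, lam a (dia b c) = dia (lam a b) (lam a c) := by
  intro a b c
  apply hcanc (cir a b)
  calc dia (cir a b) (lam a (dia b c))
      = cir a (dia b (dia b c)) := (hlaw a b (dia b c)).symm
    _ = cir a (dia (dia b b) c) := by rw [hdia_assoc]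
    _ = dia (cir a (dia b b)) (lam a c) := hlaw a (dia b b) c
    _ = dia (dia (cir a b) (lam a b)) (lam a c) := by rw [hlaw]
    _ = dia (cir a b) (dia (lam a b) (lam a c)) := hdia_assoc _ _ _
end

section
/- Let (A,⋄,∘,λ) be a left semi-truss in which (A,⋄) is a left cancellative semigroup with an idempotent e, and define σ: A→A by σ(a) = a∘e. Then for all a,b ∈ A, σ(a∘b) = σ(a) ⋄ λ(a, σ(b)). -/
/-- In a left semi-truss `(A, ⋄, ∘, λ)` with `(A, ⋄)` a left
cancellative semigroup with idempotent `e`, setting `σ(a) = a ∘ e` one has the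
cocycle property `σ(a∘b) = σ(a) ⋄ λ(a, σ(b))`. -/
theorem semiTruss_sigma_cocycle {A : Type*} (dia cir : A → A → A) (lam : A → A → A)
    (hdia_assoc : ∀ a b c : A, dia (dia a b) c = dia a (dia b c))
    (hcir_assoc : ∀ a b c : A, cir (cir a b) c = cir a (cir b c))
    (hcanc : ∀ a b c : A, dia a b = dia a c → b = c)
    (hlaw : ∀ a b c : A, cir a (dia b c) = dia (cir a b) (lam a c))
    (e : A) (he : dia e e = e) :
    ∀ a b : A, cir (cir a b) e = dia (cir a e) (lam a (cir b e)) := by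
  have hle : ∀ x, dia e x = x := fun x =>
    hcanc e _ _ (by rw [← hdia_assoc, he])
  intro a b
  rw [hcir_assoc, ← hlaw, hle]
end

section
/- Let (A,⋄,∘,λ) be a left semi-truss in which (A,⋄) is a left cancellative semigroup with an idempotent e, and define σ: A→A by σ(a) = a∘e. Then σ is bijective if and only if there exists a right identity n for ∘ (a∘n = a for all a) and an element u ∈ A with e∘u = n and u∘e = n (i.e. e is invertible with respect to n). -/
/-- In a left semi-truss `(A, ⋄, ∘, λ)` with `(A, ⋄)` a left
cancellative semigroup with idempotent `e`, the map `σ : a ↦ a ∘ e` is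
bijective iff `∘` has a right identity `n` with respect to which `e` is
invertible. -/
theorem semiTruss_sigma_bijective_iff {A : Type*} (dia cir : A → A → A) (lam : A → A → A)
    (hdia_assoc : ∀ a b c : A, dia (dia a b) c = dia a (dia b c))
    (hcir_assoc : ∀ a b c : A, cir (cir a b) c = cir a (cir b c))
    (hcanc : ∀ a b c : A, dia a b = dia a c → b = c)
    (hlaw : ∀ a b c : A, cir a (dia b c) = dia (cir a b) (lam a c))
    (e : A) (he : dia e e = e) :
    Function.Bijective (fun a : A => cir a e) ↔
      ∃ n : A, (∀ a : A, cir a n = a) ∧ ∃ u : A, cir e u = n ∧ cir u e = n := by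
  constructor
  · rintro ⟨hinj, hsurj⟩
    obtain ⟨t, ht⟩ := hsurj e
    simp only at ht
    have hrid : ∀ a : A, cir a t = a := by
      intro a
      apply hinj
      simp only
      rw [hcir_assoc, ht]
    obtain ⟨u, hu⟩ := hsurj t
    simp only at hu
    refine ⟨t, hrid, u, ?_, hu⟩
    apply hinj
    simp only
    rw [hcir_assoc, hu, hrid e, ht]
  · rintro ⟨n, hn, u, heu, hue⟩
    constructor
    · intro a b hab
      simp only at hab
      calc a = cir a n := (hn a).symm
        _ = cir (cir a e) u := by rw [← heu, ← hcir_assoc]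
        _ = cir (cir b e) u := by rw [hab]
        _ = b := by rw [hcir_assoc, heu, hn]
    · intro b
      exact ⟨cir b u, by simp only; rw [hcir_assoc, hue, hn]⟩
end

section
/- Let (A,⋄,∘,λ) be a left semi-truss in which (A,∘) is a group (with identity 1 and inversion a ↦ a°) and (A,⋄) is a left cancellative semigroup with an idempotent e. Define the binary operation • on A by a•b = a∘e°∘b. Then (A,•) is a group with identity e and inversion a ↦ e∘a°∘e, and the semi-brace distributive law holds: for all a,b,c ∈ A, a•(b⋄c) = (a•b) ⋄ (a•((e∘a°∘e)⋄c)), i.e. a•(b⋄c) = (a•b)⋄(a•(a^{•-1}⋄c)) where a^{•-1} is the inverse of a in (A,•). In particular (A,⋄,•) is a left semi-brace. -/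
/-- In a left semi-truss `(A, ⋄, ∘, λ)` with `(A, ∘)` a group and
`(A, ⋄)` a left cancellative semigroup with idempotent `e`, the operation
`a • b = a ∘ e° ∘ b` makes `(A, •)` a group with identity `e` and inversion
`a ↦ e ∘ a° ∘ e`, satisfying the semi-brace law
`a • (b ⋄ c) = (a • b) ⋄ (a • (a^{•-1} ⋄ c))`; i.e. `(A, ⋄, •)` is a left
semi-brace. -/
theorem semiTruss_to_semiBrace {A : Type*} (dia cir : A → A → A) (lam : A → A → A)
    (hdia_assoc : ∀ a b c : A, dia (dia a b) c = dia a (dia b c))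
    (hcir_assoc : ∀ a b c : A, cir (cir a b) c = cir a (cir b c))
    (hcanc : ∀ a b c : A, dia a b = dia a c → b = c)
    (hlaw : ∀ a b c : A, cir a (dia b c) = dia (cir a b) (lam a c))
    (one : A) (inv : A → A)
    (hone_l : ∀ a : A, cir one a = a) (hone_r : ∀ a : A, cir a one = a)
    (hinv_l : ∀ a : A, cir (inv a) a = one) (hinv_r : ∀ a : A, cir a (inv a) = one)
    (e : A) (he : dia e e = e)
    (bul : A → A → A) (hbul : ∀ a b : A, bul a b = cir (cir a (inv e)) b)
    (binv : A → A) (hbinv : ∀ a : A, binv a = cir (cir e (inv a)) e) :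
    (∀ a b c : A, bul (bul a b) c = bul a (bul b c)) ∧
    (∀ a : A, bul e a = a) ∧
    (∀ a : A, bul a e = a) ∧
    (∀ a : A, bul a (binv a) = e) ∧
    (∀ a : A, bul (binv a) a = e) ∧
    (∀ a b c : A, bul a (dia b c) = dia (bul a b) (bul a (dia (binv a) c))) := by

  have he_l : ∀ y : A, dia e y = y := fun y =>
    hcanc e (dia e y) y (by rw [← hdia_assoc, he])
  have key : ∀ a : A, cir (cir a (inv e)) (cir (cir e (inv a)) e) = e := by
    intro a
    simp only [hcir_assoc]
    rw [← hcir_assoc (inv e) e, hinv_l, hone_l, ← hcir_assoc a (inv a), hinv_r, hone_l]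
  refine ⟨?_, ?_, ?_, ?_, ?_, ?_⟩
  · intro a b c; simp only [hbul, hcir_assoc]
  · intro a; rw [hbul, hinv_r, hone_l]
  · intro a; rw [hbul, hcir_assoc, hinv_l, hone_r]
  · intro a; rw [hbul, hbinv, key]
  · intro a
    rw [hbul, hbinv]
    simp only [hcir_assoc]
    rw [← hcir_assoc e (inv e), hinv_r, hone_l, hinv_l, hone_r]
  · intro a b c
    simp only [hbul, hbinv]
    rw [hlaw, hlaw, key, he_l]
end

section
/- Let (A,⋄,∘,λ) be a left semi-truss in which (A,∘) is a group (with identity 1 and inversion a ↦ a°) and (A,⋄) is a left cancellative semigroup with an idempotent e. Define r: A×A → A×A by r(a,b) = ( a∘e°∘((e∘a°∘e)⋄b) , e∘((e∘a°∘e)⋄b)°∘b ). Then r is a solution of the set-theoretic Yang–Baxter equation: (r×id)∘(id×r)∘(r×id) = (id×r)∘(r×id)∘(id×r) as maps A×A×A → A×A×A. -/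
private def rhoA {G : Type*} [Group G] (dia : G → G → G) (e g h : G) : G :=
  g * e⁻¹ * dia (e * g⁻¹ * e) h

private def tauA {G : Type*} [Group G] (dia : G → G → G) (e g h : G) : G :=
  e * (dia (e * g⁻¹ * e) h)⁻¹ * h

private theorem semiTruss_aux {G : Type*} [Group G] (dia lam : G → G → G)
    (hdia_assoc : ∀ a b c : G, dia (dia a b) c = dia a (dia b c))
    (hcanc : ∀ a b c : G, dia a b = dia a c → b = c)
    (hlaw : ∀ a b c : G, a * dia b c = dia (a * b) (lam a c))
    (e : G) (he : dia e e = e) (a b c : G) :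
    (rhoA dia e (rhoA dia e a b) (rhoA dia e (tauA dia e a b) c),
     tauA dia e (rhoA dia e a b) (rhoA dia e (tauA dia e a b) c),
     tauA dia e (tauA dia e a b) c)
    =
    (rhoA dia e a (rhoA dia e b c),
     rhoA dia e (tauA dia e a (rhoA dia e b c)) (tauA dia e b c),
     tauA dia e (tauA dia e a (rhoA dia e b c)) (tauA dia e b c)) := by
  -- basic lambda calculus of the semi-truss
  have hz : ∀ x : G, dia e x = x := fun x => hcanc e _ x (by rw [← hdia_assoc, he])
  have hF : ∀ g y : G, dia (g * e) (lam g y) = g * y := fun g y => by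
    rw [← hlaw, hz]
  have hA : ∀ X g y : G, dia X (lam g y) = g * dia (g⁻¹ * X) y := fun X g y => by
    rw [hlaw g (g⁻¹ * X) y, mul_inv_cancel_left]
  have hlam1 : ∀ y : G, lam 1 y = y := fun y => hcanc e _ _ (by
    have h := hlaw 1 e y
    rw [one_mul, one_mul] at h
    exact h.symm)
  have hE : ∀ g h y : G, lam (g * h) y = lam g (lam h y) := fun g h y =>
    hcanc (g * h * e) _ _ (by
      rw [hF (g * h) y, hA (g * h * e) g (lam h y),
        show g⁻¹ * (g * h * e) = h * e by group, hF h y, mul_assoc])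
  have hD : ∀ g x y : G, lam g (dia x y) = dia (lam g x) (lam g y) := fun g x y =>
    hcanc (g * e) _ _ (by
      rw [hF g (dia x y), hlaw g x y, ← hdia_assoc, hF g x])
  have keyRho : ∀ g h : G, rhoA dia e g h = lam (g * e⁻¹) h := fun g h => by
    show g * e⁻¹ * dia (e * g⁻¹ * e) h = lam (g * e⁻¹) h
    rw [hlaw (g * e⁻¹) (e * g⁻¹ * e) h, show g * e⁻¹ * (e * g⁻¹ * e) = e by group, hz]
  -- abbreviations
  set S := dia (e * a⁻¹ * e) b with hS
  set u := dia (e * b⁻¹ * e) c with hu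
  set L := lam (e * b⁻¹) b with hL
  set m := e * b⁻¹ * (e * a⁻¹ * e) with hm
  set W := dia m c with hW
  set v := dia m (dia L c) with hv
  -- key dia facts
  have f1 : dia (e * b⁻¹ * e) L = e := by
    have h := hF (e * b⁻¹) b
    rw [show e * b⁻¹ * b = e by group] at h
    exact h
  have f2 : dia L u = c := hcanc (e * b⁻¹ * e) _ _ (by
    rw [← hdia_assoc, f1, hz, hu])
  have f3 : dia u (lam (u * e⁻¹) (e * u⁻¹ * c)) = c := by
    have h := hF (u * e⁻¹) (e * u⁻¹ * c)
    rw [show u * e⁻¹ * e = u by group, show u * e⁻¹ * (e * u⁻¹ * c) = c by group] at h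
    exact h
  have f4 : dia c (lam (u * e⁻¹) (e * u⁻¹ * c)) = dia L c := by
    nth_rewrite 1 [← f2]
    rw [hdia_assoc, f3]
  have f5 : dia (lam (e * u⁻¹) c) (e * u⁻¹ * c)
      = lam (e * u⁻¹) (dia c (lam (u * e⁻¹) (e * u⁻¹ * c))) := by
    rw [hD, ← hE, show e * u⁻¹ * (u * e⁻¹) = (1 : G) by group, hlam1]
  have f6 : e * b⁻¹ * S = dia m L := by
    rw [hS, hL, hm]
    exact hlaw (e * b⁻¹) (e * a⁻¹ * e) b
  have g11 : e * u⁻¹ * W = dia (e * u⁻¹ * m) (lam (e * u⁻¹) c) := by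
    rw [hW]
    exact hlaw (e * u⁻¹) m c
  have g12 : dia (e * u⁻¹ * W) (e * u⁻¹ * c) = e * u⁻¹ * v := by
    rw [g11, hdia_assoc, f5, hA (e * u⁻¹ * m) (e * u⁻¹) _,
      show (e * u⁻¹)⁻¹ * (e * u⁻¹ * m) = m by group, f4, ← hv]
  -- commonly used unfoldings
  have hτab : tauA dia e a b = e * S⁻¹ * b := by rw [hS]; rfl
  have hρbc : rhoA dia e b c = b * e⁻¹ * u := by rw [hu]; rfl
  have hτbc : tauA dia e b c = e * u⁻¹ * c := by rw [hu]; rfl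
  -- the intermediate s' and t' on the right-hand side
  have gs' : dia (e * a⁻¹ * e) (rhoA dia e b c) = b * e⁻¹ * W := by
    rw [keyRho b c, hA, show (b * e⁻¹)⁻¹ * (e * a⁻¹ * e) = e * b⁻¹ * (e * a⁻¹ * e) by group,
      ← hm, ← hW]
  have gt' : tauA dia e a (rhoA dia e b c) = e * W⁻¹ * u := by
    show e * (dia (e * a⁻¹ * e) (rhoA dia e b c))⁻¹ * (rhoA dia e b c) = e * W⁻¹ * u
    rw [gs', hρbc]
    group
  -- Component 1
  have h1 : rhoA dia e (rhoA dia e a b) (rhoA dia e (tauA dia e a b) c)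
      = rhoA dia e a (rhoA dia e b c) := by
    rw [keyRho (rhoA dia e a b) (rhoA dia e (tauA dia e a b) c),
      keyRho (tauA dia e a b) c, keyRho a (rhoA dia e b c), keyRho b c,
      ← hE, ← hE]
    congr 1
    rw [hτab, show rhoA dia e a b = a * e⁻¹ * S by rw [hS]; rfl]
    group
  -- Component 2 : both sides equal e * W⁻¹ * v
  have g7 : dia (e * (rhoA dia e a b)⁻¹ * e) (rhoA dia e (tauA dia e a b) c)
      = tauA dia e a b * e⁻¹ * W := by
    conv_lhs => rw [keyRho (tauA dia e a b) c]
    rw [hA, show (tauA dia e a b * e⁻¹)⁻¹ * (e * (rhoA dia e a b)⁻¹ * e)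
        = e * b⁻¹ * (e * a⁻¹ * e) by
      rw [hτab, show rhoA dia e a b = a * e⁻¹ * S by rw [hS]; rfl]; group, ← hm, ← hW]
  have g8 : rhoA dia e (tauA dia e a b) c = tauA dia e a b * e⁻¹ * v := by
    calc rhoA dia e (tauA dia e a b) c
        = tauA dia e a b * e⁻¹ * dia (e * (tauA dia e a b)⁻¹ * e) c := rfl
      _ = tauA dia e a b * e⁻¹ * dia (e * b⁻¹ * S) c := by
          rw [show e * (tauA dia e a b)⁻¹ * e = e * b⁻¹ * S by rw [hτab]; group]
      _ = tauA dia e a b * e⁻¹ * dia (dia m L) c := by rw [f6]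
      _ = tauA dia e a b * e⁻¹ * v := by rw [hdia_assoc, ← hv]
  have hX2 : tauA dia e (rhoA dia e a b) (rhoA dia e (tauA dia e a b) c)
      = e * W⁻¹ * v := by
    calc tauA dia e (rhoA dia e a b) (rhoA dia e (tauA dia e a b) c)
        = e * (dia (e * (rhoA dia e a b)⁻¹ * e) (rhoA dia e (tauA dia e a b) c))⁻¹
            * (rhoA dia e (tauA dia e a b) c) := rfl
      _ = e * (tauA dia e a b * e⁻¹ * W)⁻¹ * (tauA dia e a b * e⁻¹ * v) := by
          rw [g7, g8]
      _ = e * W⁻¹ * v := by group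
  have hY2 : rhoA dia e (tauA dia e a (rhoA dia e b c)) (tauA dia e b c)
      = e * W⁻¹ * v := by
    rw [keyRho (tauA dia e a (rhoA dia e b c)) (tauA dia e b c), gt', hτbc]
    have h := hA e (e * W⁻¹ * u * e⁻¹) (e * u⁻¹ * c)
    rw [hz] at h
    rw [h, show (e * W⁻¹ * u * e⁻¹)⁻¹ * e = e * u⁻¹ * W by group, g12]
    group
  have h2 : tauA dia e (rhoA dia e a b) (rhoA dia e (tauA dia e a b) c)
      = rhoA dia e (tauA dia e a (rhoA dia e b c)) (tauA dia e b c) :=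
    hX2.trans hY2.symm
  -- Component 3 : both sides equal e * v⁻¹ * c
  have hX3 : tauA dia e (tauA dia e a b) c = e * v⁻¹ * c := by
    calc tauA dia e (tauA dia e a b) c
        = e * (dia (e * (tauA dia e a b)⁻¹ * e) c)⁻¹ * c := rfl
      _ = e * (dia (e * b⁻¹ * S) c)⁻¹ * c := by
          rw [show e * (tauA dia e a b)⁻¹ * e = e * b⁻¹ * S by rw [hτab]; group]
      _ = e * v⁻¹ * c := by rw [f6, hdia_assoc, ← hv]
  have hY3 : tauA dia e (tauA dia e a (rhoA dia e b c)) (tauA dia e b c)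
      = e * v⁻¹ * c := by
    calc tauA dia e (tauA dia e a (rhoA dia e b c)) (tauA dia e b c)
        = e * (dia (e * (tauA dia e a (rhoA dia e b c))⁻¹ * e) (tauA dia e b c))⁻¹
            * (tauA dia e b c) := rfl
      _ = e * (dia (e * (e * W⁻¹ * u)⁻¹ * e) (e * u⁻¹ * c))⁻¹ * (e * u⁻¹ * c) := by
          rw [gt', hτbc]
      _ = e * (dia (e * u⁻¹ * W) (e * u⁻¹ * c))⁻¹ * (e * u⁻¹ * c) := by
          rw [show e * (e * W⁻¹ * u)⁻¹ * e = e * u⁻¹ * W by group]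
      _ = e * (e * u⁻¹ * v)⁻¹ * (e * u⁻¹ * c) := by rw [g12]
      _ = e * v⁻¹ * c := by group
  have h3 : tauA dia e (tauA dia e a b) c
      = tauA dia e (tauA dia e a (rhoA dia e b c)) (tauA dia e b c) :=
    hX3.trans hY3.symm
  rw [Prod.mk.injEq, Prod.mk.injEq]
  exact ⟨h1, h2, h3⟩

theorem semiTruss_yangBaxter {A : Type*} (dia cir : A → A → A) (lam : A → A → A)
    (hdia_assoc : ∀ a b c : A, dia (dia a b) c = dia a (dia b c))
    (hcir_assoc : ∀ a b c : A, cir (cir a b) c = cir a (cir b c))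
    (hcanc : ∀ a b c : A, dia a b = dia a c → b = c)
    (hlaw : ∀ a b c : A, cir a (dia b c) = dia (cir a b) (lam a c))
    (one : A) (inv : A → A)
    (hone_l : ∀ a : A, cir one a = a) (hone_r : ∀ a : A, cir a one = a)
    (hinv_l : ∀ a : A, cir (inv a) a = one) (hinv_r : ∀ a : A, cir a (inv a) = one)
    (e : A) (he : dia e e = e)
    (r : A × A → A × A)
    (hr : ∀ a b : A, r (a, b) =
      (cir (cir a (inv e)) (dia (cir (cir e (inv a)) e) b),
       cir (cir e (inv (dia (cir (cir e (inv a)) e) b))) b)) :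
    ∀ p : A × A × A,
      (fun q : A × A × A => ((r (q.1, q.2.1)).1, (r (q.1, q.2.1)).2, q.2.2))
        ((fun q : A × A × A => (q.1, r (q.2.1, q.2.2)))
          ((fun q : A × A × A => ((r (q.1, q.2.1)).1, (r (q.1, q.2.1)).2, q.2.2)) p)) =
      (fun q : A × A × A => (q.1, r (q.2.1, q.2.2)))
        ((fun q : A × A × A => ((r (q.1, q.2.1)).1, (r (q.1, q.2.1)).2, q.2.2))
          ((fun q : A × A × A => (q.1, r (q.2.1, q.2.2))) p)) := by
  intro p
  obtain ⟨a, b, c⟩ := p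
  letI : Group A :=
    { mul := cir, mul_assoc := hcir_assoc, one := one, one_mul := hone_l,
      mul_one := hone_r, inv := inv, inv_mul_cancel := hinv_l }
  have hrP : ∀ g h : A, r (g, h) = (rhoA dia e g h, tauA dia e g h) := fun g h => hr g h
  simp only [hrP]
  exact semiTruss_aux dia lam hdia_assoc hcanc hlaw e he a b c
end

section
/- Let A be a set with two associative binary operations ∘ and ⋄ such that (A,⋄) is an inverse semigroup with inversion a ↦ a†. Suppose the ternary distributive law holds: a∘(b⋄c†⋄d) = (a∘b)⋄(a∘c)†⋄(a∘d) for all a,b,c,d ∈ A. Then for all a,b,c ∈ A, a∘(b⋄c) = (a∘b) ⋄ (a∘(c⋄c†))† ⋄ (a∘c); i.e. the law (2) of the paper holds with σ(a,c) = a∘(c⋄c†). -/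
/-- If `(A, ⋄)` is an inverse semigroup (with inversion `†`),
`∘` is associative, and the ternary distributive law
`a∘(b ⋄ c† ⋄ d) = (a∘b) ⋄ (a∘c)† ⋄ (a∘d)` holds, then
`a∘(b⋄c) = (a∘b) ⋄ (a∘(c⋄c†))† ⋄ (a∘c)`. -/
theorem ternary_implies_sigma_inverse {A : Type*} (dia cir : A → A → A) (inv : A → A)
    (hdia_assoc : ∀ a b c : A, dia (dia a b) c = dia a (dia b c))
    (hcir_assoc : ∀ a b c : A, cir (cir a b) c = cir a (cir b c))
    (hinv1 : ∀ a : A, dia (dia a (inv a)) a = a)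
    (hinv2 : ∀ a : A, dia (dia (inv a) a) (inv a) = inv a)
    (huniq : ∀ a x : A, dia (dia a x) a = a → dia (dia x a) x = x → x = inv a)
    (hternary : ∀ a b c d : A,
      cir a (dia (dia b (inv c)) d) = dia (dia (cir a b) (inv (cir a c))) (cir a d)) :
    ∀ a b c : A,
      cir a (dia b c) =
        dia (dia (cir a b) (inv (cir a (dia c (inv c))))) (cir a c) := by
  intro a b c
  set e := dia c (inv c) with he
  have hee : dia e e = e := by
    rw [he, hdia_assoc, ← hdia_assoc (inv c) c (inv c), hinv2]
  have hinve : inv e = e := (huniq e e (by rw [hee, hee]) (by rw [hee, hee])).symm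
  have key : dia (dia b (inv e)) c = dia b c := by
    rw [hinve, he, ← hdia_assoc, hdia_assoc b c (inv c), hdia_assoc, hinv1]
  rw [← key, hternary]
end

section
/- Let A be a set with two associative binary operations ∘ and ⋄ such that (A,⋄) is an inverse semigroup with inversion a ↦ a†. Suppose the ternary distributive law holds: a∘(b⋄c†⋄d) = (a∘b)⋄(a∘c)†⋄(a∘d) for all a,b,c,d ∈ A. Then for all a,b,c ∈ A, a∘(b⋄c) = (a∘b) ⋄ (a∘(b†⋄b))† ⋄ (a∘c); i.e. the law (4) of the paper holds with τ(a,b) = a∘(b†⋄b). -/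
/-- If `(A, ⋄)` is an inverse semigroup (with inversion `†`),
`∘` is associative, and the ternary distributive law
`a∘(b ⋄ c† ⋄ d) = (a∘b) ⋄ (a∘c)† ⋄ (a∘d)` holds, then
`a∘(b⋄c) = (a∘b) ⋄ (a∘(b†⋄b))† ⋄ (a∘c)`. -/
theorem ternary_implies_tau_inverse {A : Type*} (dia cir : A → A → A) (inv : A → A)
    (hdia_assoc : ∀ a b c : A, dia (dia a b) c = dia a (dia b c))
    (hcir_assoc : ∀ a b c : A, cir (cir a b) c = cir a (cir b c))
    (hinv1 : ∀ a : A, dia (dia a (inv a)) a = a)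
    (hinv2 : ∀ a : A, dia (dia (inv a) a) (inv a) = inv a)
    (huniq : ∀ a x : A, dia (dia a x) a = a → dia (dia x a) x = x → x = inv a)
    (hternary : ∀ a b c d : A,
      cir a (dia (dia b (inv c)) d) = dia (dia (cir a b) (inv (cir a c))) (cir a d)) :
    ∀ a b c : A,
      cir a (dia b c) =
        dia (dia (cir a b) (inv (cir a (dia (inv b) b)))) (cir a c) := by
  intro a b c
  set e := dia (inv b) b with he
  have hee : dia e e = e := by
    rw [he, hdia_assoc, ← hdia_assoc b, hinv1]
  have hie : e = inv e := huniq e e (by rw [hee, hee]) (by rw [hee, hee])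
  have hbe : dia b (inv e) = b := by
    rw [← hie, he, ← hdia_assoc, hinv1]
  calc cir a (dia b c) = cir a (dia (dia b (inv e)) c) := by rw [hbe]
    _ = dia (dia (cir a b) (inv (cir a e))) (cir a c) := hternary a b e c
end

section
/- Let (A,⋄,∘,λ) be a left semi-truss such that (A,⋄) is an inverse semigroup with inversion a ↦ a†, and define σ(a,b) = a∘(b⋄b†). Then for all a,b ∈ A, a∘b = σ(a,b) ⋄ λ(a,b), i.e. a∘b = (a∘(b⋄b†)) ⋄ λ(a,b). -/
/-- In a left semi-truss `(A, ⋄, ∘, λ)` with `(A, ⋄)` an inverse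
semigroup and `σ(a,b) = a∘(b⋄b†)`, one has `a∘b = σ(a,b) ⋄ λ(a,b)`. -/
theorem semiTruss_inverse_factorisation {A : Type*} (dia cir : A → A → A)
    (lam : A → A → A) (inv : A → A)
    (hdia_assoc : ∀ a b c : A, dia (dia a b) c = dia a (dia b c))
    (hcir_assoc : ∀ a b c : A, cir (cir a b) c = cir a (cir b c))
    (hinv1 : ∀ a : A, dia (dia a (inv a)) a = a)
    (hinv2 : ∀ a : A, dia (dia (inv a) a) (inv a) = inv a)
    (huniq : ∀ a x : A, dia (dia a x) a = a → dia (dia x a) x = x → x = inv a)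
    (hlaw : ∀ a b c : A, cir a (dia b c) = dia (cir a b) (lam a c)) :
    ∀ a b : A, cir a b = dia (cir a (dia b (inv b))) (lam a b) := by
  intro a b
  have hb : dia (dia b (inv b)) b = b := hinv1 b
  calc cir a b = cir a (dia (dia b (inv b)) b) := by rw [hb]
    _ = dia (cir a (dia b (inv b))) (lam a b) := hlaw a _ b
end

section
/- Let (A,⋄,∘,λ) be a left semi-truss such that (A,⋄) is an inverse semigroup with inversion a ↦ a†, and define σ(a,b) = a∘(b⋄b†). Then for all a,b ∈ A, (a∘b)⋄λ(a,b)† ≤ σ(a,b) and σ(a,b)†⋄(a∘b) ≤ λ(a,b), where ≤ is the natural partial order on the inverse semigroup (A,⋄). -/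
/-- In an inverse semigroup, a product of idempotents is idempotent. -/
theorem aux_idem_mul {A : Type*} (dia : A → A → A) (inv : A → A)
    (hdia_assoc : ∀ a b c : A, dia (dia a b) c = dia a (dia b c))
    (hinv1 : ∀ a : A, dia (dia a (inv a)) a = a)
    (hinv2 : ∀ a : A, dia (dia (inv a) a) (inv a) = inv a)
    (huniq : ∀ a x : A, dia (dia a x) a = a → dia (dia x a) x = x → x = inv a)
    (e f : A) (he : dia e e = e) (hf : dia f f = f) :
    dia (dia e f) (dia e f) = dia e f := by
  have hez : ∀ z, dia e (dia e z) = dia e z := fun z => by rw [← hdia_assoc, he]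
  have hfz : ∀ z, dia f (dia f z) = dia f z := fun z => by rw [← hdia_assoc, hf]
  set x := inv (dia e f) with hx
  have hax : dia (dia (dia e f) x) (dia e f) = dia e f := hinv1 _
  have hxa : dia (dia x (dia e f)) x = x := hinv2 _
  have hxaz : ∀ z, dia x (dia e (dia f (dia x z))) = dia x z := by
    intro z
    have := congrArg (fun t => dia t z) hxa
    simpa only [hdia_assoc] using this
  -- step 1 : f x e is also an inverse of e f, hence equals x
  have h1 : dia (dia f x) e = x := by
    apply huniq
    · simp only [hdia_assoc, hfz, hez]
      simpa only [hdia_assoc] using hax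
    · simp only [hdia_assoc, hez, hfz]
      rw [hxaz]
  -- step 2 : x is idempotent
  have hxx : dia x x = x := by
    conv_lhs => rw [← h1, ← h1]
    simp only [hdia_assoc, he, hez, hfz]
    rw [hxaz, ← hdia_assoc, h1]
  -- step 3 : ef = inv x = x
  have hef : dia e f = x := by
    have h2 : dia e f = inv x := huniq x (dia e f)
      (by simpa only [hdia_assoc] using hxa) (by simpa only [hdia_assoc] using hax)
    have h3 : x = inv x := huniq x x (by rw [hxx, hxx]) (by rw [hxx, hxx])
    rw [h2, ← h3]
  rw [hef, hxx]

/-- Idempotents commute in an inverse semigroup. -/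
theorem aux_idem_comm {A : Type*} (dia : A → A → A) (inv : A → A)
    (hdia_assoc : ∀ a b c : A, dia (dia a b) c = dia a (dia b c))
    (hinv1 : ∀ a : A, dia (dia a (inv a)) a = a)
    (hinv2 : ∀ a : A, dia (dia (inv a) a) (inv a) = inv a)
    (huniq : ∀ a x : A, dia (dia a x) a = a → dia (dia x a) x = x → x = inv a)
    (e f : A) (he : dia e e = e) (hf : dia f f = f) :
    dia e f = dia f e := by
  have hez : ∀ z, dia e (dia e z) = dia e z := fun z => by rw [← hdia_assoc, he]
  have hfz : ∀ z, dia f (dia f z) = dia f z := fun z => by rw [← hdia_assoc, hf]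
  have hefi := aux_idem_mul dia inv hdia_assoc hinv1 hinv2 huniq e f he hf
  have hfei := aux_idem_mul dia inv hdia_assoc hinv1 hinv2 huniq f e hf he
  have hfe : dia f e = inv (dia e f) := by
    apply huniq
    · simp only [hdia_assoc, hfz, hez]
      simpa only [hdia_assoc] using hefi
    · simp only [hdia_assoc, hez, hfz]
      simpa only [hdia_assoc] using hfei
  have hself : dia e f = inv (dia e f) :=
    huniq _ _ (by rw [hefi, hefi]) (by rw [hefi, hefi])
  rw [hfe, ← hself]

/-- In a left semi-truss `(A, ⋄, ∘, λ)` with `(A, ⋄)` an inverse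
semigroup and `σ(a,b) = a∘(b⋄b†)`, one has `(a∘b)⋄λ(a,b)† ≤ σ(a,b)` and
`σ(a,b)†⋄(a∘b) ≤ λ(a,b)` in the natural partial order
(`x ≤ y` iff `x = y⋄e` for some idempotent `e`). -/
theorem semiTruss_inverse_order {A : Type*} (dia cir : A → A → A)
    (lam : A → A → A) (inv : A → A)
    (hdia_assoc : ∀ a b c : A, dia (dia a b) c = dia a (dia b c))
    (hcir_assoc : ∀ a b c : A, cir (cir a b) c = cir a (cir b c))
    (hinv1 : ∀ a : A, dia (dia a (inv a)) a = a)
    (hinv2 : ∀ a : A, dia (dia (inv a) a) (inv a) = inv a)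
    (huniq : ∀ a x : A, dia (dia a x) a = a → dia (dia x a) x = x → x = inv a)
    (hlaw : ∀ a b c : A, cir a (dia b c) = dia (cir a b) (lam a c)) :
    ∀ a b : A,
      (∃ f : A, dia f f = f ∧
        dia (cir a b) (inv (lam a b)) = dia (cir a (dia b (inv b))) f) ∧
      (∃ f : A, dia f f = f ∧
        dia (inv (cir a (dia b (inv b)))) (cir a b) = dia (lam a b) f) := by
  intro a b
  set l := lam a b with hl
  set s := cir a (dia b (inv b)) with hs
  -- key decomposition: a∘b = σ ⋄ λ
  have hkey : cir a b = dia s l := by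
    conv_lhs => rw [← hinv1 b]
    rw [hlaw]
  -- idempotents
  have he1 : dia (dia l (inv l)) (dia l (inv l)) = dia l (inv l) := by
    simpa only [hdia_assoc] using congrArg (fun t => dia t (inv l)) (hinv1 l)
  have he2 : dia (dia (inv s) s) (dia (inv s) s) = dia (inv s) s := by
    simpa only [hdia_assoc] using congrArg (fun t => dia t s) (hinv2 s)
  have hcomm : dia (dia l (inv l)) (dia (inv s) s) = dia (dia (inv s) s) (dia l (inv l)) :=
    aux_idem_comm dia inv hdia_assoc hinv1 hinv2 huniq _ _ he1 he2
  have swap : ∀ z, dia l (dia (inv l) (dia (inv s) (dia s z)))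
      = dia (inv s) (dia s (dia l (dia (inv l) z))) := by
    intro z
    simpa only [hdia_assoc] using congrArg (fun t => dia t z) hcomm
  have hll : dia l (dia (inv l) l) = l := by
    simpa only [hdia_assoc] using hinv1 l
  have hsz : ∀ z, dia s (dia (inv s) (dia s z)) = dia s z := by
    intro z
    simpa only [hdia_assoc] using congrArg (fun t => dia t z) (hinv1 s)
  constructor
  · exact ⟨dia l (inv l), he1, by rw [hkey, hdia_assoc]⟩
  · refine ⟨dia (inv l) (dia (dia (inv s) s) l), ?_, ?_⟩
    · simp only [hdia_assoc]
      rw [swap l, hll, hsz]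
    · rw [hkey]
      simp only [hdia_assoc]
      rw [swap l, hll]
end

section
/- Let (A,⋄,∘,λ) be a left semi-truss such that (A,⋄) is an inverse semigroup with inversion a ↦ a†, and define σ(a,b) = a∘(b⋄b†). Then for all a,b ∈ A, (a∘b)⋄(a∘b)† ≤ σ(a,b)⋄σ(a,b)† and (a∘b)†⋄(a∘b) ≤ λ(a,b)†⋄λ(a,b), where ≤ is the natural partial order on the inverse semigroup (A,⋄). -/
namespace SemiTrussAux

variable {A : Type*} [Semigroup A] (inv : A → A)

section
variable (hinv1 : ∀ a : A, a * inv a * a = a)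
variable (hinv2 : ∀ a : A, inv a * a * inv a = inv a)
variable (huniq : ∀ a x : A, a * x * a = a → x * a * x = x → x = inv a)

include hinv1 hinv2 huniq

lemma inv_idem {e : A} (he : e * e = e) : inv e = e :=
  (huniq e e (by rw [he, he]) (by rw [he, he])).symm

lemma idem_mul {e f : A} (he : e * e = e) (hf : f * f = f) :
    (e * f) * (e * f) = e * f := by
  set x := inv (e * f) with hxdef
  have hep : ∀ t : A, e * (e * t) = e * t := fun t => by rw [← mul_assoc, he]
  have hfp : ∀ t : A, f * (f * t) = f * t := fun t => by rw [← mul_assoc, hf]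
  have hx1 : (e * f) * x * (e * f) = e * f := hinv1 (e * f)
  have hx2 : x * (e * f) * x = x := hinv2 (e * f)
  have hx2e : x * (e * (f * (x * e))) = x * e := by
    have := congrArg (· * e) hx2; simpa [mul_assoc] using this
  have hA : (e * f) * (f * x * e) * (e * f) = e * f := by
    simp only [mul_assoc]; rw [hfp, hep]; simpa [mul_assoc] using hx1
  have hB : (f * x * e) * (e * f) * (f * x * e) = f * x * e := by
    simp only [mul_assoc]; rw [hep, hfp, hx2e]
  have hfxe : f * x * e = x := huniq (e * f) (f * x * e) hA hB
  have hxx : x * x = x := by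
    rw [← hfxe]; simp only [mul_assoc]; rw [hx2e]
  have hefx : e * f = x := by
    have h := huniq x (e * f) hx2 hx1
    rwa [inv_idem inv hinv1 hinv2 huniq hxx] at h
  rw [hefx]; exact hxx

lemma idem_comm {e f : A} (he : e * e = e) (hf : f * f = f) :
    e * f = f * e := by
  have hef := idem_mul inv hinv1 hinv2 huniq he hf
  have hfe := idem_mul inv hinv1 hinv2 huniq hf he
  have hep : ∀ t : A, e * (e * t) = e * t := fun t => by rw [← mul_assoc, he]
  have hfp : ∀ t : A, f * (f * t) = f * t := fun t => by rw [← mul_assoc, hf]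
  have hA : (e * f) * (f * e) * (e * f) = e * f := by
    simp only [mul_assoc]; rw [hfp, hep]; simpa [mul_assoc] using hef
  have hB : (f * e) * (e * f) * (f * e) = f * e := by
    simp only [mul_assoc]; rw [hep, hfp]; simpa [mul_assoc] using hfe
  have h := huniq (e * f) (f * e) hA hB
  rw [inv_idem inv hinv1 hinv2 huniq hef] at h
  exact h.symm

end

lemma mul_inv_idem (hinv1 : ∀ a : A, a * inv a * a = a) (a : A) :
    (a * inv a) * (a * inv a) = a * inv a := by
  rw [← mul_assoc (a * inv a) a (inv a), hinv1]

lemma inv_mul_idem (hinv2 : ∀ a : A, inv a * a * inv a = inv a) (a : A) :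
    (inv a * a) * (inv a * a) = inv a * a := by
  rw [← mul_assoc (inv a * a) (inv a) a, hinv2]

lemma hinv1p (hinv1 : ∀ a : A, a * inv a * a = a) (a t : A) :
    a * (inv a * (a * t)) = a * t := by
  have := congrArg (· * t) (hinv1 a); simpa [mul_assoc] using this

lemma hinv2p (hinv2 : ∀ a : A, inv a * a * inv a = inv a) (a t : A) :
    inv a * (a * (inv a * t)) = inv a * t := by
  have := congrArg (· * t) (hinv2 a); simpa [mul_assoc] using this

lemma inv_mul (hinv1 : ∀ a : A, a * inv a * a = a)
    (hinv2 : ∀ a : A, inv a * a * inv a = inv a)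
    (huniq : ∀ a x : A, a * x * a = a → x * a * x = x → x = inv a)
    (x y : A) : inv (x * y) = inv y * inv x := by
  have comm : (y * inv y) * (inv x * x) = (inv x * x) * (y * inv y) :=
    idem_comm inv hinv1 hinv2 huniq (mul_inv_idem inv hinv1 y) (inv_mul_idem inv hinv2 x)
  have comm4 : ∀ t : A, y * (inv y * (inv x * (x * t))) = inv x * (x * (y * (inv y * t))) := by
    intro t; have := congrArg (· * t) comm; simpa [mul_assoc] using this
  have hinv1' : ∀ a : A, a * (inv a * a) = a := fun a => by
    simpa [mul_assoc] using hinv1 a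
  have hinv2' : ∀ a : A, inv a * (a * inv a) = inv a := fun a => by
    simpa [mul_assoc] using hinv2 a
  have hA : (x * y) * (inv y * inv x) * (x * y) = x * y := by
    simp only [mul_assoc]; rw [comm4, hinv1', hinv1p inv hinv1]
  have hB : (inv y * inv x) * (x * y) * (inv y * inv x) = inv y * inv x := by
    simp only [mul_assoc]; rw [← comm4, hinv2', hinv2p inv hinv2]
  exact (huniq (x * y) (inv y * inv x) hA hB).symm

end SemiTrussAux


/-- In a left semi-truss `(A, ⋄, ∘, λ)` with `(A, ⋄)` an inverse
semigroup and `σ(a,b) = a∘(b⋄b†)`, one has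
`(a∘b)⋄(a∘b)† ≤ σ(a,b)⋄σ(a,b)†` and `(a∘b)†⋄(a∘b) ≤ λ(a,b)†⋄λ(a,b)`
in the natural partial order (`x ≤ y` iff `x = y⋄e` for some idempotent `e`). -/
theorem semiTruss_inverse_order_idem {A : Type*} (dia cir : A → A → A)
    (lam : A → A → A) (inv : A → A)
    (hdia_assoc : ∀ a b c : A, dia (dia a b) c = dia a (dia b c))
    (hcir_assoc : ∀ a b c : A, cir (cir a b) c = cir a (cir b c))
    (hinv1 : ∀ a : A, dia (dia a (inv a)) a = a)
    (hinv2 : ∀ a : A, dia (dia (inv a) a) (inv a) = inv a)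
    (huniq : ∀ a x : A, dia (dia a x) a = a → dia (dia x a) x = x → x = inv a)
    (hlaw : ∀ a b c : A, cir a (dia b c) = dia (cir a b) (lam a c)) :
    ∀ a b : A,
      (∃ f : A, dia f f = f ∧
        dia (cir a b) (inv (cir a b)) =
          dia (dia (cir a (dia b (inv b))) (inv (cir a (dia b (inv b))))) f) ∧
      (∃ f : A, dia f f = f ∧
        dia (inv (cir a b)) (cir a b) = dia (dia (inv (lam a b)) (lam a b)) f) := by
  letI : Mul A := ⟨dia⟩
  letI : Semigroup A := ⟨hdia_assoc⟩
  have hinv1' : ∀ a : A, a * inv a * a = a := hinv1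
  have hinv2' : ∀ a : A, inv a * a * inv a = inv a := hinv2
  have huniq' : ∀ a x : A, a * x * a = a → x * a * x = x → x = inv a := huniq
  intro a b
  set p := cir a b with hpdef
  set s := cir a (dia b (inv b)) with hsdef
  set l := lam a b with hldef
  have hp : p = s * l := by
    have h0 : dia (dia b (inv b)) b = b := hinv1 b
    have h := hlaw a (dia b (inv b)) b
    rw [h0] at h
    exact h
  have hinvp : inv p = inv l * inv s := by
    rw [hp]; exact SemiTrussAux.inv_mul inv hinv1' hinv2' huniq' s l
  constructor
  · refine ⟨p * inv p, SemiTrussAux.mul_inv_idem inv hinv1' p, ?_⟩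
    show p * inv p = (s * inv s) * (p * inv p)
    rw [hinvp, hp]
    simp only [mul_assoc]
    rw [SemiTrussAux.hinv1p inv hinv1']
  · refine ⟨inv p * p, SemiTrussAux.inv_mul_idem inv hinv2' p, ?_⟩
    show inv p * p = (inv l * l) * (inv p * p)
    rw [hinvp, hp]
    simp only [mul_assoc]
    rw [SemiTrussAux.hinv2p inv hinv2']
end

section
/- Let (A,⋄,∘,λ) be a left semi-truss such that (A,⋄) is an inverse semigroup with inversion a ↦ a†, and define σ(a,b) = a∘(b⋄b†). Then for all a,b,c ∈ A, (a∘b) ⋄ σ(a,c)† ⋄ (a∘c) ≤ a∘(b⋄c), where ≤ is the natural partial order on the inverse semigroup (A,⋄). -/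
/-- In a left semi-truss `(A, ⋄, ∘, λ)` with `(A, ⋄)` an inverse
semigroup and `σ(a,b) = a∘(b⋄b†)`, one has
`(a∘b) ⋄ σ(a,c)† ⋄ (a∘c) ≤ a∘(b⋄c)` in the natural partial order
(`x ≤ y` iff `x = y⋄e` for some idempotent `e`). -/
theorem semiTruss_inverse_distrib_le {A : Type*} (dia cir : A → A → A)
    (lam : A → A → A) (inv : A → A)
    (hdia_assoc : ∀ a b c : A, dia (dia a b) c = dia a (dia b c))
    (hcir_assoc : ∀ a b c : A, cir (cir a b) c = cir a (cir b c))
    (hinv1 : ∀ a : A, dia (dia a (inv a)) a = a)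
    (hinv2 : ∀ a : A, dia (dia (inv a) a) (inv a) = inv a)
    (huniq : ∀ a x : A, dia (dia a x) a = a → dia (dia x a) x = x → x = inv a)
    (hlaw : ∀ a b c : A, cir a (dia b c) = dia (cir a b) (lam a c)) :
    ∀ a b c : A, ∃ f : A, dia f f = f ∧
      dia (dia (cir a b) (inv (cir a (dia c (inv c))))) (cir a c) =
        dia (cir a (dia b c)) f := by
  letI : Mul A := ⟨dia⟩
  letI : Semigroup A := ⟨hdia_assoc⟩
  have h1 : ∀ x : A, x * inv x * x = x := hinv1
  have h2 : ∀ x : A, inv x * x * inv x = inv x := hinv2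
  have hu : ∀ y x : A, y * x * y = y → x * y * x = x → x = inv y := huniq
  have hinvidem : ∀ e : A, e * e = e → inv e = e := fun e he =>
    (hu e e (by rw [he, he]) (by rw [he, he])).symm
  -- products of idempotents are idempotent
  have prod_idem : ∀ e f : A, e * e = e → f * f = f → (e * f) * (e * f) = e * f := by
    intro e f he hf
    set x := inv (e * f) with hx
    have A1 : (e * f) * (f * x * e) * (e * f) = e * f := by
      have : (e * f) * (f * x * e) * (e * f) = e * (f * f) * x * (e * e) * f := by
        simp [mul_assoc]
      rw [this, he, hf]
      have : e * f * x * e * f = (e * f) * x * (e * f) := by simp [mul_assoc]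
      rw [this, hx, h1]
    have A2 : (f * x * e) * (e * f) * (f * x * e) = f * x * e := by
      have : (f * x * e) * (e * f) * (f * x * e) = f * (x * (e * e) * (f * f) * x) * e := by
        simp [mul_assoc]
      rw [this, he, hf]
      have hmid : x * (e * f) * x = x := by rw [hx]; exact h2 (e * f)
      have : x * (e * f) * x = x * e * f * x := by simp [mul_assoc]
      rw [← this, hmid]
    have hxeq : f * x * e = x := by
      have := hu (e * f) (f * x * e) A1 A2
      rw [this, ← hx]
    have hm : x * (e * f) * x = x := by rw [hx]; exact h2 (e * f)
    have hxx : x * x = x := by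
      calc x * x = (f * x * e) * (f * x * e) := by rw [hxeq]
        _ = f * (x * (e * f) * x) * e := by simp [mul_assoc]
        _ = f * x * e := by rw [hm]
        _ = x := hxeq
    have hefx : e * f = inv x := by
      apply hu x (e * f)
      · rw [hx]; exact h2 (e * f)
      · rw [hx]; exact h1 (e * f)
    rw [hefx, hinvidem x hxx]; exact hxx
  have comm : ∀ e f : A, e * e = e → f * f = f → e * f = f * e := by
    intro e f he hf
    have hef := prod_idem e f he hf
    have hfe := prod_idem f e hf he
    have B1 : (e * f) * (f * e) * (e * f) = e * f := by
      have : (e * f) * (f * e) * (e * f) = e * (f * f) * (e * e) * f := by simp [mul_assoc]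
      rw [this, he, hf]
      have : e * f * e * f = (e * f) * (e * f) := by simp [mul_assoc]
      rw [this, hef]
    have B2 : (f * e) * (e * f) * (f * e) = f * e := by
      have : (f * e) * (e * f) * (f * e) = f * (e * e) * (f * f) * e := by simp [mul_assoc]
      rw [this, he, hf]
      have : f * e * f * e = (f * e) * (f * e) := by simp [mul_assoc]
      rw [this, hfe]
    have := hu (e * f) (f * e) B1 B2
    rw [this, hinvidem (e * f) hef]
  intro a b c
  set s := cir a (c * inv c) with hs
  set L := lam a c with hL
  set e := inv s * s with he'
  have he : e * e = e := by
    rw [he']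
    have : inv s * s * (inv s * s) = inv s * s * inv s * s := by simp [mul_assoc]
    rw [this, h2]
  have hLLi : (L * inv L) * (L * inv L) = L * inv L := by
    have : L * inv L * (L * inv L) = L * inv L * L * inv L := by simp [mul_assoc]
    rw [this, h1]
  refine ⟨inv L * (inv s * s) * L, ?_, ?_⟩
  · show (inv L * e * L) * (inv L * e * L) = inv L * e * L
    have : (inv L * e * L) * (inv L * e * L) = inv L * (e * (L * inv L)) * e * L := by
      simp [mul_assoc]
    rw [this, comm e (L * inv L) he hLLi]
    have : inv L * (L * inv L * e) * e * L = (inv L * L * inv L) * (e * e) * L := by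
      simp [mul_assoc]
    rw [this, h2, he]
  · show (cir a b * inv s) * (cir a c) = (cir a (b * c)) * (inv L * e * L)
    have hsL : cir a c = s * L := by
      conv_lhs => rw [show c = c * inv c * c from (h1 c).symm]
      have := hlaw a (c * inv c) c
      rw [← hL, ← hs] at this
      exact this
    have hbc : cir a (b * c) = cir a b * L := by
      have := hlaw a b c
      rw [← hL] at this
      exact this
    have keyeL : e * L = L * (inv L * e * L) := by
      conv_lhs => rw [show L = L * inv L * L from (h1 L).symm]
      have : e * (L * inv L * L) = e * (L * inv L) * L := by simp [mul_assoc]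
      rw [this, comm e (L * inv L) he hLLi]
      simp [mul_assoc]
    calc (cir a b * inv s) * (cir a c) = cir a b * inv s * (s * L) := by rw [hsL]
      _ = cir a b * (e * L) := by rw [he']; simp [mul_assoc]
      _ = cir a b * (L * (inv L * e * L)) := by rw [keyeL]
      _ = cir a (b * c) * (inv L * e * L) := by rw [hbc]; simp [mul_assoc]
end

section
/- Let (A,⋄,∘,λ) be a left semi-truss such that (A,⋄) is an inverse semigroup with inversion a ↦ a†, let σ(a,b) = a∘(b⋄b†), and assume λ(a,b) = σ(a,b)†⋄(a∘b) for all a,b ∈ A. Then for every a,b ∈ A and every idempotent e ∈ A (e⋄e = e): σ(a, e⋄b) = σ(a,e)⋄σ(a,b)†⋄σ(a,b) and also σ(a, e⋄b) = σ(a,b)⋄σ(a,e)†⋄σ(a,e). -/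
/-- In a left semi-truss `(A, ⋄, ∘, λ)` with `(A, ⋄)` an inverse
semigroup, `σ(a,b) = a∘(b⋄b†)`, and `λ(a,b) = σ(a,b)†⋄(a∘b)`, for every
idempotent `e`:
`σ(a, e⋄b) = σ(a,e)⋄σ(a,b)†⋄σ(a,b)` and `σ(a, e⋄b) = σ(a,b)⋄σ(a,e)†⋄σ(a,e)`. -/
theorem semiTruss_inverse_sigma_idem {A : Type*} (dia cir : A → A → A)
    (lam : A → A → A) (inv : A → A)
    (hdia_assoc : ∀ a b c : A, dia (dia a b) c = dia a (dia b c))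
    (hcir_assoc : ∀ a b c : A, cir (cir a b) c = cir a (cir b c))
    (hinv1 : ∀ a : A, dia (dia a (inv a)) a = a)
    (hinv2 : ∀ a : A, dia (dia (inv a) a) (inv a) = inv a)
    (huniq : ∀ a x : A, dia (dia a x) a = a → dia (dia x a) x = x → x = inv a)
    (hlaw : ∀ a b c : A, cir a (dia b c) = dia (cir a b) (lam a c))
    (hlam : ∀ a b : A, lam a b = dia (inv (cir a (dia b (inv b)))) (cir a b)) :
    ∀ a b e : A, dia e e = e →
      cir a (dia (dia e b) (inv (dia e b))) =
        dia (dia (cir a (dia e (inv e))) (inv (cir a (dia b (inv b)))))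
          (cir a (dia b (inv b))) ∧
      cir a (dia (dia e b) (inv (dia e b))) =
        dia (dia (cir a (dia b (inv b))) (inv (cir a (dia e (inv e)))))
          (cir a (dia e (inv e))) := by
  intro a b e he
  -- basic helpers
  have hinv1' : ∀ x, dia x (dia (inv x) x) = x := fun x => by
    rw [← hdia_assoc]; exact hinv1 x
  have hinv2' : ∀ x, dia (inv x) (dia x (inv x)) = inv x := fun x => by
    rw [← hdia_assoc]; exact hinv2 x
  have h2 : ∀ x t, dia (inv x) (dia x (dia (inv x) t)) = dia (inv x) t := by
    intro x t
    have h := congrArg (fun z => dia z t) (hinv2 x)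
    simpa only [hdia_assoc] using h
  have idem_tail : ∀ x, dia x x = x → ∀ t, dia x (dia x t) = dia x t := by
    intro x hx t; rw [← hdia_assoc, hx]
  have idem_inv : ∀ x, dia x x = x → inv x = x := by
    intro x hx
    exact (huniq x x (by rw [hx, hx]) (by rw [hx, hx])).symm
  have ct : ∀ u v, dia u v = dia v u → ∀ t, dia u (dia v t) = dia v (dia u t) := by
    intro u v h t; rw [← hdia_assoc, h, hdia_assoc]
  -- product of idempotents is idempotent
  have prod_idem : ∀ x y, dia x x = x → dia y y = y →
      dia (dia x y) (dia x y) = dia x y := by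
    intro x y hx hy
    have hra : dia (dia (dia x y) (dia y (dia (inv (dia x y)) x))) (dia x y) = dia x y := by
      have h := hinv1' (dia x y)
      simp only [hdia_assoc] at h
      simp only [hdia_assoc]
      rw [idem_tail y hy, idem_tail x hx, h]
    have hrb : dia (dia (dia y (dia (inv (dia x y)) x)) (dia x y))
        (dia y (dia (inv (dia x y)) x)) = dia y (dia (inv (dia x y)) x) := by
      have h := h2 (dia x y) x
      simp only [hdia_assoc] at h
      simp only [hdia_assoc]
      rw [idem_tail x hx, idem_tail y hy, h]
    have hreq := huniq (dia x y) (dia y (dia (inv (dia x y)) x)) hra hrb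
    have hqq : dia (inv (dia x y)) (inv (dia x y)) = inv (dia x y) := by
      rw [← hreq]
      have h := h2 (dia x y) x
      simp only [hdia_assoc] at h
      simp only [hdia_assoc]
      rw [h]
    have hqi := idem_inv _ hqq
    have h := huniq (inv (dia x y)) (dia x y) (hinv2 (dia x y)) (hinv1 (dia x y))
    rw [hqi] at h
    rw [h]; exact hqq
  -- idempotents commute
  have comm : ∀ x y, dia x x = x → dia y y = y → dia x y = dia y x := by
    intro x y hx hy
    have hxy := prod_idem x y hx hy
    have hyx := prod_idem y x hy hx
    have h1' : dia (dia (dia x y) (dia y x)) (dia x y) = dia x y := by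
      simp only [hdia_assoc]
      rw [idem_tail y hy, idem_tail x hx]
      simpa only [hdia_assoc] using hxy
    have h2' : dia (dia (dia y x) (dia x y)) (dia y x) = dia y x := by
      simp only [hdia_assoc]
      rw [idem_tail x hx, idem_tail y hy]
      simpa only [hdia_assoc] using hyx
    have h := huniq (dia x y) (dia y x) h1' h2'
    rw [h, idem_inv _ hxy]
  -- b ⋄ b† is idempotent
  have hbb : dia (dia b (inv b)) (dia b (inv b)) = dia b (inv b) := by
    simp only [hdia_assoc]
    rw [hinv2' b]
  have hbbi : inv (dia b (inv b)) = dia b (inv b) := idem_inv _ hbb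
  have hei : inv e = e := idem_inv e he
  have hc : dia e (dia b (inv b)) = dia (dia b (inv b)) e :=
    comm e (dia b (inv b)) he hbb
  -- inv (e ⋄ b) = b† ⋄ e
  have cond1 : dia (dia (dia e b) (dia (inv b) e)) (dia e b) = dia e b := by
    simp only [hdia_assoc]
    rw [idem_tail e he]
    have h := ct (dia b (inv b)) e hc.symm b
    simp only [hdia_assoc] at h
    rw [h, idem_tail e he, hinv1' b]
  have cond2 : dia (dia (dia (inv b) e) (dia e b)) (dia (inv b) e) = dia (inv b) e := by
    simp only [hdia_assoc]
    rw [idem_tail e he]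
    have h := ct e (dia b (inv b)) hc e
    simp only [hdia_assoc] at h
    rw [h, he, h2 b e]
  have hie : inv (dia e b) = dia (inv b) e :=
    (huniq (dia e b) (dia (inv b) e) cond1 cond2).symm
  -- key: (e⋄b)⋄(e⋄b)† = e ⋄ (b⋄b†) = (b⋄b†) ⋄ e
  have key0 : dia (dia e b) (inv (dia e b)) = dia e (dia (dia b (inv b)) e) := by
    rw [hie]; simp only [hdia_assoc]
  have key1 : dia (dia e b) (inv (dia e b)) = dia e (dia b (inv b)) := by
    rw [key0, ← hc, idem_tail e he]
  have key2 : dia (dia e b) (inv (dia e b)) = dia (dia b (inv b)) e := by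
    rw [key1, hc]
  have heei : dia e (inv e) = e := by rw [hei, he]
  constructor
  · rw [key1, hlaw a e (dia b (inv b)), hlam a (dia b (inv b)), hbbi, hbb, heei,
      hdia_assoc]
  · rw [key2, hlaw a (dia b (inv b)) e, hlam a e, heei, hdia_assoc]
end

section
/- Let (A,⋄,∘,λ) be a left semi-truss such that (A,⋄) is an inverse semigroup with inversion a ↦ a†, let σ(a,b) = a∘(b⋄b†), and assume λ(a,b) = σ(a,b)†⋄(a∘b) for all a,b ∈ A. Then for all a,b,c ∈ A, the elements σ(a,b)⋄σ(a,c)† and σ(a,c)⋄σ(a,b)† are equal and are idempotents in (A,⋄); in particular σ(a,b) and σ(a,c) are left compatible. -/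
section Aux
variable {A : Type*}

private lemma dup' {dia : A → A → A}
    (hassoc : ∀ a b c : A, dia (dia a b) c = dia a (dia b c))
    (f : A) (hf : dia f f = f) (t : A) :
    dia f (dia f t) = dia f t := by rw [← hassoc, hf]

private lemma inv_inv' {dia : A → A → A} {inv : A → A}
    (h1 : ∀ a : A, dia (dia a (inv a)) a = a)
    (h2 : ∀ a : A, dia (dia (inv a) a) (inv a) = inv a)
    (hu : ∀ a x : A, dia (dia a x) a = a → dia (dia x a) x = x → x = inv a)
    (a : A) : inv (inv a) = a :=
  (hu (inv a) a (h2 a) (h1 a)).symm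

private lemma idem_inv' {dia : A → A → A} {inv : A → A}
    (hu : ∀ a x : A, dia (dia a x) a = a → dia (dia x a) x = x → x = inv a)
    (e : A) (he : dia e e = e) : inv e = e :=
  (hu e e (by rw [he, he]) (by rw [he, he])).symm

private lemma idem_comm {dia : A → A → A} {inv : A → A}
    (hassoc : ∀ a b c : A, dia (dia a b) c = dia a (dia b c))
    (h1 : ∀ a : A, dia (dia a (inv a)) a = a)
    (h2 : ∀ a : A, dia (dia (inv a) a) (inv a) = inv a)
    (hu : ∀ a x : A, dia (dia a x) a = a → dia (dia x a) x = x → x = inv a)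
    (e f : A) (he : dia e e = e) (hf : dia f f = f) :
    dia (dia e f) (dia e f) = dia e f ∧ dia e f = dia f e := by
  set x := inv (dia e f) with hx
  have E1 : dia e (dia f (dia x (dia e f))) = dia e f := by
    have := h1 (dia e f); simp only [hassoc] at this; exact this
  have E2 : dia x (dia e (dia f x)) = x := by
    have := h2 (dia e f); simp only [hassoc] at this; exact this
  have E2' : dia x (dia e (dia f (dia x e))) = dia x e := by
    have := congrArg (fun s => dia s e) E2
    simp only [hassoc] at this; exact this
  have hA : dia f (dia x e) = x := by
    refine hu (dia e f) (dia f (dia x e)) ?_ ?_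
    · simp only [hassoc, dup' hassoc f hf, dup' hassoc e he]
      exact E1
    · simp only [hassoc, dup' hassoc f hf, dup' hassoc e he]
      rw [E2']
  have hxid : dia x x = x := by
    conv_lhs => rw [← hA]
    simp only [hassoc]
    rw [E2']; exact hA
  have hef_x : dia e f = x := by
    have h3 : inv x = x := idem_inv' hu x hxid
    have h4 : inv x = dia e f := inv_inv' h1 h2 hu (dia e f)
    rw [← h3, h4]
  have hefid : dia (dia e f) (dia e f) = dia e f := by rw [hef_x]; exact hxid
  have hfeid : dia (dia f e) (dia f e) = dia f e := by
    set y := inv (dia f e) with hy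
    have F1 : dia f (dia e (dia y (dia f e))) = dia f e := by
      have := h1 (dia f e); simp only [hassoc] at this; exact this
    have F2 : dia y (dia f (dia e y)) = y := by
      have := h2 (dia f e); simp only [hassoc] at this; exact this
    have F2' : dia y (dia f (dia e (dia y f))) = dia y f := by
      have := congrArg (fun s => dia s f) F2
      simp only [hassoc] at this; exact this
    have hB : dia e (dia y f) = y := by
      refine hu (dia f e) (dia e (dia y f)) ?_ ?_
      · simp only [hassoc, dup' hassoc f hf, dup' hassoc e he]
        exact F1
      · simp only [hassoc, dup' hassoc f hf, dup' hassoc e he]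
        rw [F2']
    have hyid : dia y y = y := by
      conv_lhs => rw [← hB]
      simp only [hassoc]
      rw [F2']; exact hB
    have h3 : inv y = y := idem_inv' hu y hyid
    have h4 : inv y = dia f e := inv_inv' h1 h2 hu (dia f e)
    have h5 : dia f e = y := by rw [← h3, h4]
    rw [h5]; exact hyid
  have hcomm : dia f e = dia e f := by
    have h6 : dia f e = inv (dia e f) := by
      refine hu (dia e f) (dia f e) ?_ ?_
      · simp only [hassoc, dup' hassoc f hf, dup' hassoc e he]
        have := hefid; simp only [hassoc] at this; exact this
      · simp only [hassoc, dup' hassoc f hf, dup' hassoc e he]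
        have := hfeid; simp only [hassoc] at this; exact this
    rw [h6]
    exact hef_x.symm
  exact ⟨hefid, hcomm.symm⟩

private lemma cc_idem {dia : A → A → A} {inv : A → A}
    (hassoc : ∀ a b c : A, dia (dia a b) c = dia a (dia b c))
    (h1 : ∀ a : A, dia (dia a (inv a)) a = a)
    (q : A) : dia (dia q (inv q)) (dia q (inv q)) = dia q (inv q) := by
  rw [← hassoc, h1]

private lemma cc_idem' {dia : A → A → A} {inv : A → A}
    (hassoc : ∀ a b c : A, dia (dia a b) c = dia a (dia b c))
    (h2 : ∀ a : A, dia (dia (inv a) a) (inv a) = inv a)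
    (q : A) : dia (dia (inv q) q) (dia (inv q) q) = dia (inv q) q := by
  rw [← hassoc, h2]

private lemma inv_mul {dia : A → A → A} {inv : A → A}
    (hassoc : ∀ a b c : A, dia (dia a b) c = dia a (dia b c))
    (h1 : ∀ a : A, dia (dia a (inv a)) a = a)
    (h2 : ∀ a : A, dia (dia (inv a) a) (inv a) = inv a)
    (hu : ∀ a x : A, dia (dia a x) a = a → dia (dia x a) x = x → x = inv a)
    (p q : A) : inv (dia p q) = dia (inv q) (inv p) := by
  have hE : dia (dia q (inv q)) (dia q (inv q)) = dia q (inv q) := cc_idem hassoc h1 q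
  have hF : dia (dia (inv p) p) (dia (inv p) p) = dia (inv p) p := cc_idem' hassoc h2 p
  have comm := (idem_comm hassoc h1 h2 hu _ _ hE hF).2
  refine (hu (dia p q) (dia (inv q) (inv p)) ?_ ?_).symm
  · have e1 : dia (dia (dia p q) (dia (inv q) (inv p))) (dia p q)
        = dia p (dia (dia (dia q (inv q)) (dia (inv p) p)) q) := by
      simp only [hassoc]
    rw [e1, comm]
    have e2 : dia p (dia (dia (dia (inv p) p) (dia q (inv q))) q)
        = dia (dia (dia p (inv p)) p) (dia (dia q (inv q)) q) := by
      simp only [hassoc]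
    rw [e2, h1, h1]
  · have e1 : dia (dia (dia (inv q) (inv p)) (dia p q)) (dia (inv q) (inv p))
        = dia (inv q) (dia (dia (dia (inv p) p) (dia q (inv q))) (inv p)) := by
      simp only [hassoc]
    rw [e1, ← comm]
    have e2 : dia (inv q) (dia (dia (dia q (inv q)) (dia (inv p) p)) (inv p))
        = dia (dia (dia (inv q) q) (inv q)) (dia (dia (inv p) p) (inv p)) := by
      simp only [hassoc]
    rw [e2, h2, h2]

private lemma compat_aux {dia : A → A → A} {inv : A → A}
    (hassoc : ∀ a b c : A, dia (dia a b) c = dia a (dia b c))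
    (h1 : ∀ a : A, dia (dia a (inv a)) a = a)
    (h2 : ∀ a : A, dia (dia (inv a) a) (inv a) = inv a)
    (hu : ∀ a x : A, dia (dia a x) a = a → dia (dia x a) x = x → x = inv a)
    (u v : A)
    (key : dia u (dia (inv v) v) = dia v (dia (inv u) u)) :
    dia (dia u (inv v)) (dia u (inv v)) = dia u (inv v) := by
  have hE : dia (dia (inv v) v) (dia (inv v) v) = dia (inv v) v := cc_idem' hassoc h2 v
  have hF : dia (dia (inv u) u) (dia (inv u) u) = dia (inv u) u := cc_idem' hassoc h2 u
  have comm := (idem_comm hassoc h1 h2 hu _ _ hE hF).2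
  have step1 : dia u (inv v) = dia v (dia (inv u) (dia u (inv v))) := by
    calc dia u (inv v) = dia u (dia (dia (inv v) v) (inv v)) := by rw [h2]
    _ = dia (dia u (dia (inv v) v)) (inv v) := (hassoc u (dia (inv v) v) (inv v)).symm
    _ = dia (dia v (dia (inv u) u)) (inv v) := by rw [key]
    _ = dia v (dia (inv u) (dia u (inv v))) := by simp only [hassoc]
  nth_rewrite 2 [step1]
  have e1 : dia (dia u (inv v)) (dia v (dia (inv u) (dia u (inv v))))
      = dia u (dia (dia (dia (inv v) v) (dia (inv u) u)) (inv v)) := by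
    simp only [hassoc]
  rw [e1, comm]
  have e2 : dia u (dia (dia (dia (inv u) u) (dia (inv v) v)) (inv v))
      = dia (dia (dia u (inv u)) u) (dia (dia (inv v) v) (inv v)) := by
    simp only [hassoc]
  rw [e2, h1, h2]

end Aux


/-- In a left semi-truss `(A, ⋄, ∘, λ)` with `(A, ⋄)` an inverse
semigroup, `σ(a,b) = a∘(b⋄b†)`, and `λ(a,b) = σ(a,b)†⋄(a∘b)`, the elements
`σ(a,b)⋄σ(a,c)†` and `σ(a,c)⋄σ(a,b)†` are equal idempotents; in particular
`σ(a,b)` and `σ(a,c)` are left compatible. -/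
theorem semiTruss_inverse_sigma_compatible {A : Type*} (dia cir : A → A → A)
    (lam : A → A → A) (inv : A → A)
    (hdia_assoc : ∀ a b c : A, dia (dia a b) c = dia a (dia b c))
    (hcir_assoc : ∀ a b c : A, cir (cir a b) c = cir a (cir b c))
    (hinv1 : ∀ a : A, dia (dia a (inv a)) a = a)
    (hinv2 : ∀ a : A, dia (dia (inv a) a) (inv a) = inv a)
    (huniq : ∀ a x : A, dia (dia a x) a = a → dia (dia x a) x = x → x = inv a)
    (hlaw : ∀ a b c : A, cir a (dia b c) = dia (cir a b) (lam a c))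
    (hlam : ∀ a b : A, lam a b = dia (inv (cir a (dia b (inv b)))) (cir a b)) :
    ∀ a b c : A,
      dia (cir a (dia b (inv b))) (inv (cir a (dia c (inv c)))) =
        dia (cir a (dia c (inv c))) (inv (cir a (dia b (inv b)))) ∧
      dia (dia (cir a (dia b (inv b))) (inv (cir a (dia c (inv c)))))
          (dia (cir a (dia b (inv b))) (inv (cir a (dia c (inv c))))) =
        dia (cir a (dia b (inv b))) (inv (cir a (dia c (inv c)))) ∧
      dia (dia (cir a (dia c (inv c))) (inv (cir a (dia b (inv b)))))
          (dia (cir a (dia c (inv c))) (inv (cir a (dia b (inv b))))) =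
        dia (cir a (dia c (inv c))) (inv (cir a (dia b (inv b)))) := by
  intro a b c
  set u := cir a (dia b (inv b)) with hu_def
  set v := cir a (dia c (inv c)) with hv_def
  have heb : dia (dia b (inv b)) (dia b (inv b)) = dia b (inv b) :=
    cc_idem hdia_assoc hinv1 b
  have hec : dia (dia c (inv c)) (dia c (inv c)) = dia c (inv c) :=
    cc_idem hdia_assoc hinv1 c
  have hlam_idem : ∀ e : A, dia e e = e →
      lam a e = dia (inv (cir a e)) (cir a e) := by
    intro e he
    rw [hlam]
    have h7 : dia e (inv e) = e := by
      rw [idem_inv' huniq e he]; exact he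
    rw [h7]
  have key : dia u (dia (inv v) v) = dia v (dia (inv u) u) := by
    have comm := (idem_comm hdia_assoc hinv1 hinv2 huniq _ _ heb hec).2
    have l1 : cir a (dia (dia b (inv b)) (dia c (inv c)))
        = dia u (dia (inv v) v) := by
      rw [hlaw, hlam_idem _ hec, ← hu_def, ← hv_def]
    have l2 : cir a (dia (dia c (inv c)) (dia b (inv b)))
        = dia v (dia (inv u) u) := by
      rw [hlaw, hlam_idem _ heb, ← hv_def, ← hu_def]
    rw [← l1, ← l2, comm]
  have hx : dia (dia u (inv v)) (dia u (inv v)) = dia u (inv v) :=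
    compat_aux hdia_assoc hinv1 hinv2 huniq u v key
  have hy : dia (dia v (inv u)) (dia v (inv u)) = dia v (inv u) :=
    compat_aux hdia_assoc hinv1 hinv2 huniq v u key.symm
  refine ⟨?_, hx, hy⟩
  have h3 : inv (dia u (inv v)) = dia u (inv v) :=
    idem_inv' huniq _ hx
  have h4 : inv (dia u (inv v)) = dia (inv (inv v)) (inv u) :=
    inv_mul hdia_assoc hinv1 hinv2 huniq u (inv v)
  rw [← h3, h4, inv_inv' hinv1 hinv2 huniq]
end

section
/- Let (A,⋄,∘,λ) be a left semi-truss such that (A,⋄) is an inverse semigroup with inversion a ↦ a†, let σ(a,b) = a∘(b⋄b†), and assume λ(a,b) = σ(a,b)†⋄(a∘b) for all a,b ∈ A. Then for all a,b ∈ A, σ(a, b†) ⋄ (a∘b)† = (a∘b†) ⋄ σ(a,b)†, and likewise λ(a, b†) = λ(a,b)†. -/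
/-- In a left semi-truss `(A, ⋄, ∘, λ)` with `(A, ⋄)` an inverse
semigroup, `σ(a,b) = a∘(b⋄b†)`, and `λ(a,b) = σ(a,b)†⋄(a∘b)`, one has
`σ(a,b†)⋄(a∘b)† = (a∘b†)⋄σ(a,b)†` and `λ(a,b†) = λ(a,b)†`. -/
theorem semiTruss_inverse_lambda_inv {A : Type*} (dia cir : A → A → A)
    (lam : A → A → A) (inv : A → A)
    (hdia_assoc : ∀ a b c : A, dia (dia a b) c = dia a (dia b c))
    (hcir_assoc : ∀ a b c : A, cir (cir a b) c = cir a (cir b c))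
    (hinv1 : ∀ a : A, dia (dia a (inv a)) a = a)
    (hinv2 : ∀ a : A, dia (dia (inv a) a) (inv a) = inv a)
    (huniq : ∀ a x : A, dia (dia a x) a = a → dia (dia x a) x = x → x = inv a)
    (hlaw : ∀ a b c : A, cir a (dia b c) = dia (cir a b) (lam a c))
    (hlam : ∀ a b : A, lam a b = dia (inv (cir a (dia b (inv b)))) (cir a b)) :
    ∀ a b : A,
      dia (cir a (dia (inv b) (inv (inv b)))) (inv (cir a b)) =
        dia (cir a (inv b)) (inv (cir a (dia b (inv b)))) ∧
      lam a (inv b) = inv (lam a b) := by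
  -- basic facts about the inverse semigroup (A, dia)
  have hii : ∀ x : A, inv (inv x) = x := fun x =>
    (huniq (inv x) x (hinv2 x) (hinv1 x)).symm
  have hidem_inv : ∀ e : A, dia e e = e → inv e = e := by
    intro e he
    exact (huniq e e (by rw [he, he]) (by rw [he, he])).symm
  have hinv1' : ∀ x z : A, dia x (dia (inv x) (dia x z)) = dia x z := fun x z => by
    rw [← hdia_assoc, ← hdia_assoc, hinv1]
  have hinv2' : ∀ x z : A, dia (inv x) (dia x (dia (inv x) z)) = dia (inv x) z := fun x z => by
    rw [← hdia_assoc, ← hdia_assoc, hinv2]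
  have idem1 : ∀ y : A, dia (dia y (inv y)) (dia y (inv y)) = dia y (inv y) := fun y => by
    rw [← hdia_assoc, hinv1]
  have idem2 : ∀ y : A, dia (dia (inv y) y) (dia (inv y) y) = dia (inv y) y := fun y => by
    rw [← hdia_assoc, hinv2]
  -- product of idempotents is idempotent
  have hef_idem : ∀ e f : A, dia e e = e → dia f f = f →
      dia (dia e f) (dia e f) = dia e f := by
    intro e f he hf
    have he' : ∀ x, dia e (dia e x) = dia e x := fun x => by rw [← hdia_assoc, he]
    have hf' : ∀ x, dia f (dia f x) = dia f x := fun x => by rw [← hdia_assoc, hf]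
    have h1s : dia e (dia f (dia (inv (dia e f)) (dia e f))) = dia e f := by
      simpa only [hdia_assoc] using hinv1 (dia e f)
    have h2' : ∀ x, dia (inv (dia e f)) (dia e (dia f (dia (inv (dia e f)) x))) =
        dia (inv (dia e f)) x := by
      intro x
      simpa only [hdia_assoc] using congrArg (fun y => dia y x) (hinv2 (dia e f))
    have hA : dia (dia f (inv (dia e f))) e = inv (dia e f) := by
      refine huniq _ _ ?_ ?_
      · simp only [hdia_assoc]
        rw [hf', he']
        exact h1s
      · simp only [hdia_assoc]
        rw [he', hf', h2']
    have hAs : dia f (dia (inv (dia e f)) e) = inv (dia e f) := by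
      simpa only [hdia_assoc] using hA
    have hgg : dia (inv (dia e f)) (inv (dia e f)) = inv (dia e f) := by
      conv_lhs => rw [← hA]
      simp only [hdia_assoc]
      rw [h2']
      exact hAs
    have hinvg : inv (inv (dia e f)) = inv (dia e f) := hidem_inv _ hgg
    have hfix : dia e f = inv (dia e f) := by
      conv_lhs => rw [← hii (dia e f)]
      rw [hinvg]
    rw [hfix]
    exact hgg
  -- idempotents commute
  have hcomm : ∀ e f : A, dia e e = e → dia f f = f → dia e f = dia f e := by
    intro e f he hf
    have he' : ∀ x, dia e (dia e x) = dia e x := fun x => by rw [← hdia_assoc, he]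
    have hf' : ∀ x, dia f (dia f x) = dia f x := fun x => by rw [← hdia_assoc, hf]
    have hef := hef_idem e f he hf
    have hfe := hef_idem f e hf he
    have hefs : dia e (dia f (dia e f)) = dia e f := by
      simpa only [hdia_assoc] using hef
    have hfes : dia f (dia e (dia f e)) = dia f e := by
      simpa only [hdia_assoc] using hfe
    have hfeinv : dia f e = inv (dia e f) := by
      refine huniq _ _ ?_ ?_
      · simp only [hdia_assoc]
        rw [hf', he']
        exact hefs
      · simp only [hdia_assoc]
        rw [he', hf']
        exact hfes
    rw [hfeinv, hidem_inv _ hef]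
  -- anti-automorphism: inv (x ⋄ y) = inv y ⋄ inv x
  have antiinv : ∀ x y : A, inv (dia x y) = dia (inv y) (inv x) := by
    intro x y
    refine (huniq _ _ ?_ ?_).symm
    · calc dia (dia (dia x y) (dia (inv y) (inv x))) (dia x y)
          = dia x (dia (dia (dia y (inv y)) (dia (inv x) x)) y) := by
            simp only [hdia_assoc]
        _ = dia x (dia (dia (dia (inv x) x) (dia y (inv y))) y) := by
            rw [hcomm _ _ (idem1 y) (idem2 x)]
        _ = dia x y := by
            simp only [hdia_assoc]
            rw [hinv1']
            rw [show dia y (dia (inv y) y) = y from by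
              simpa only [hdia_assoc] using hinv1 y]
    · calc dia (dia (dia (inv y) (inv x)) (dia x y)) (dia (inv y) (inv x))
          = dia (inv y) (dia (dia (dia (inv x) x) (dia y (inv y))) (inv x)) := by
            simp only [hdia_assoc]
        _ = dia (inv y) (dia (dia (dia y (inv y)) (dia (inv x) x)) (inv x)) := by
            rw [hcomm _ _ (idem2 x) (idem1 y)]
        _ = dia (inv y) (inv x) := by
            simp only [hdia_assoc]
            rw [hinv2']
            rw [show dia (inv x) (dia x (inv x)) = inv x from by
              simpa only [hdia_assoc] using hinv2 x]
  -- main argument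
  intro a b
  rw [hii]
  -- abbreviating P = a∘b, Q = a∘b†, S = σ(a,b), T = σ(a,b†):
  have hs : cir a (dia b (inv b)) =
      dia (cir a b) (dia (inv (cir a (dia (inv b) b))) (cir a (inv b))) := by
    rw [hlaw a b (inv b), hlam a (inv b), hii]
  have ht : cir a (dia (inv b) b) =
      dia (cir a (inv b)) (dia (inv (cir a (dia b (inv b)))) (cir a b)) := by
    rw [hlaw a (inv b) b, hlam a b]
  have hSi : inv (cir a (dia b (inv b))) =
      dia (inv (cir a (inv b)))
        (dia (cir a (dia (inv b) b)) (inv (cir a b))) := by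
    rw [hs, antiinv, antiinv, hii, hdia_assoc]
  have hTi : inv (cir a (dia (inv b) b)) =
      dia (inv (cir a b))
        (dia (cir a (dia b (inv b))) (inv (cir a (inv b)))) := by
    rw [ht, antiinv, antiinv, hii, hdia_assoc]
  constructor
  · -- T ⋄ P† = Q ⋄ S†
    rw [ht, hSi]
    simp only [hdia_assoc]
    rw [show dia (inv (cir a b)) (dia (cir a b) (inv (cir a b))) = inv (cir a b) from by
      simpa only [hdia_assoc] using hinv2 (cir a b)]
  · -- T† ⋄ Q = (S† ⋄ P)†  = P† ⋄ S
    rw [hlam a (inv b), hlam a b, hii, antiinv, hii]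
    symm
    rw [hs, hTi]
    simp only [hdia_assoc]
    rw [hinv2']
end

section
/- Let (A,⋄,∘,λ) be a left semi-truss such that (A,⋄) is an inverse semigroup with inversion a ↦ a†, let σ(a,b) = a∘(b⋄b†), and assume λ(a,b) = σ(a,b)†⋄(a∘b) for all a,b ∈ A. Then for every a,b ∈ A and every idempotent e ∈ A (e⋄e = e), λ(a, e⋄b) = λ(a,e) ⋄ λ(a,b); that is, λ(a,−) restricts to an endomorphism-like multiplicativity on products of an idempotent with any element. -/
section Aux

variable {A : Type*}

private lemma st_inv_idem (dia : A → A → A) (inv : A → A)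
    (huniq : ∀ a x : A, dia (dia a x) a = a → dia (dia x a) x = x → x = inv a)
    {e : A} (he : dia e e = e) : inv e = e :=
  (huniq e e (by rw [he, he]) (by rw [he, he])).symm

private lemma st_idem_ii (dia : A → A → A) (inv : A → A)
    (hassoc : ∀ a b c : A, dia (dia a b) c = dia a (dia b c))
    (hinv2 : ∀ a : A, dia (dia (inv a) a) (inv a) = inv a)
    (x : A) : dia (dia (inv x) x) (dia (inv x) x) = dia (inv x) x := by
  rw [← hassoc, hinv2]

private lemma st_idem_mi (dia : A → A → A) (inv : A → A)
    (hassoc : ∀ a b c : A, dia (dia a b) c = dia a (dia b c))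
    (hinv1 : ∀ a : A, dia (dia a (inv a)) a = a)
    (x : A) : dia (dia x (inv x)) (dia x (inv x)) = dia x (inv x) := by
  rw [← hassoc, hinv1]

private lemma st_idem_mul (dia : A → A → A) (inv : A → A)
    (hassoc : ∀ a b c : A, dia (dia a b) c = dia a (dia b c))
    (hinv1 : ∀ a : A, dia (dia a (inv a)) a = a)
    (hinv2 : ∀ a : A, dia (dia (inv a) a) (inv a) = inv a)
    (huniq : ∀ a x : A, dia (dia a x) a = a → dia (dia x a) x = x → x = inv a)
    {e f : A} (he : dia e e = e) (hf : dia f f = f) :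
    dia (dia e f) (dia e f) = dia e f := by
  set a := inv (dia e f) with ha
  have heC : ∀ x, dia e (dia e x) = dia e x := fun x => by rw [← hassoc, he]
  have hfC : ∀ x, dia f (dia f x) = dia f x := fun x => by rw [← hassoc, hf]
  have h1N : dia e (dia f (dia a (dia e f))) = dia e f := by
    have h := hinv1 (dia e f)
    simp only [hassoc, ← ha] at h
    exact h
  have h2C : ∀ x, dia a (dia e (dia f (dia a x))) = dia a x := by
    intro x
    have h := congrArg (fun z => dia z x) (hinv2 (dia e f))
    simp only [hassoc, ← ha] at h
    exact h
  have key : dia (dia f a) e = a := by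
    have g1 : dia (dia (dia e f) (dia (dia f a) e)) (dia e f) = dia e f := by
      simp only [hassoc]
      rw [hfC, heC]
      exact h1N
    have g2 : dia (dia (dia (dia f a) e) (dia e f)) (dia (dia f a) e)
        = dia (dia f a) e := by
      simp only [hassoc]
      rw [heC, hfC, h2C]
    have h := huniq (dia e f) (dia (dia f a) e) g1 g2
    rw [← ha] at h
    exact h
  have keyN : dia f (dia a e) = a := by
    rw [← hassoc]
    exact key
  have haa : dia a a = a := by
    conv_lhs => rw [← key]
    simp only [hassoc]
    rw [h2C]
    exact keyN
  have hef_a : dia e f = a := by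
    have h1 := hinv1 (dia e f)
    have h2 := hinv2 (dia e f)
    rw [← ha] at h1 h2
    have h := huniq a (dia e f) h2 h1
    rw [st_inv_idem dia inv huniq haa] at h
    exact h
  rw [hef_a]
  exact haa

private lemma st_idem_comm (dia : A → A → A) (inv : A → A)
    (hassoc : ∀ a b c : A, dia (dia a b) c = dia a (dia b c))
    (hinv1 : ∀ a : A, dia (dia a (inv a)) a = a)
    (hinv2 : ∀ a : A, dia (dia (inv a) a) (inv a) = inv a)
    (huniq : ∀ a x : A, dia (dia a x) a = a → dia (dia x a) x = x → x = inv a)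
    {e f : A} (he : dia e e = e) (hf : dia f f = f) :
    dia e f = dia f e := by
  have hef := st_idem_mul dia inv hassoc hinv1 hinv2 huniq he hf
  have hfe := st_idem_mul dia inv hassoc hinv1 hinv2 huniq hf he
  have heC : ∀ x, dia e (dia e x) = dia e x := fun x => by rw [← hassoc, he]
  have hfC : ∀ x, dia f (dia f x) = dia f x := fun x => by rw [← hassoc, hf]
  have hefN : dia e (dia f (dia e f)) = dia e f := by
    simpa only [hassoc] using hef
  have hfeN : dia f (dia e (dia f e)) = dia f e := by
    simpa only [hassoc] using hfe
  have g1 : dia (dia (dia e f) (dia f e)) (dia e f) = dia e f := by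
    simp only [hassoc]
    rw [hfC, heC]
    exact hefN
  have g2 : dia (dia (dia f e) (dia e f)) (dia f e) = dia f e := by
    simp only [hassoc]
    rw [heC, hfC]
    exact hfeN
  have h := huniq (dia e f) (dia f e) g1 g2
  rw [st_inv_idem dia inv huniq hef] at h
  exact h.symm

private lemma st_inv_mul (dia : A → A → A) (inv : A → A)
    (hassoc : ∀ a b c : A, dia (dia a b) c = dia a (dia b c))
    (hinv1 : ∀ a : A, dia (dia a (inv a)) a = a)
    (hinv2 : ∀ a : A, dia (dia (inv a) a) (inv a) = inv a)
    (huniq : ∀ a x : A, dia (dia a x) a = a → dia (dia x a) x = x → x = inv a)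
    (x y : A) : inv (dia x y) = dia (inv y) (inv x) := by
  have comm : dia (dia y (inv y)) (dia (inv x) x)
      = dia (dia (inv x) x) (dia y (inv y)) :=
    st_idem_comm dia inv hassoc hinv1 hinv2 huniq
      (st_idem_mi dia inv hassoc hinv1 y) (st_idem_ii dia inv hassoc hinv2 x)
  have hx1C : ∀ z, dia x (dia (inv x) (dia x z)) = dia x z := by
    intro z
    have h := congrArg (fun w => dia w z) (hinv1 x)
    simpa only [hassoc] using h
  have hy1N : dia y (dia (inv y) y) = y := by
    simpa only [hassoc] using hinv1 y
  have hy2C : ∀ z, dia (inv y) (dia y (dia (inv y) z)) = dia (inv y) z := by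
    intro z
    have h := congrArg (fun w => dia w z) (hinv2 y)
    simpa only [hassoc] using h
  have hx2N : dia (inv x) (dia x (inv x)) = inv x := by
    simpa only [hassoc] using hinv2 x
  have g1 : dia (dia (dia x y) (dia (inv y) (inv x))) (dia x y) = dia x y := by
    have A1 : dia (dia (dia x y) (dia (inv y) (inv x))) (dia x y)
        = dia x (dia (dia (dia y (inv y)) (dia (inv x) x)) y) := by
      simp only [hassoc]
    rw [A1, comm]
    have A2 : dia x (dia (dia (dia (inv x) x) (dia y (inv y))) y)
        = dia x (dia (inv x) (dia x (dia y (dia (inv y) y)))) := by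
      simp only [hassoc]
    rw [A2, hy1N, hx1C]
  have g2 : dia (dia (dia (inv y) (inv x)) (dia x y)) (dia (inv y) (inv x))
      = dia (inv y) (inv x) := by
    have A1 : dia (dia (dia (inv y) (inv x)) (dia x y)) (dia (inv y) (inv x))
        = dia (inv y) (dia (dia (dia (inv x) x) (dia y (inv y))) (inv x)) := by
      simp only [hassoc]
    rw [A1, ← comm]
    have A2 : dia (inv y) (dia (dia (dia y (inv y)) (dia (inv x) x)) (inv x))
        = dia (inv y) (dia y (dia (inv y) (dia (inv x) (dia x (inv x))))) := by
      simp only [hassoc]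
    rw [A2, hx2N, hy2C]
  exact (huniq (dia x y) (dia (inv y) (inv x)) g1 g2).symm

end Aux

/-- In a left semi-truss `(A, ⋄, ∘, λ)` with `(A, ⋄)` an inverse
semigroup, `σ(a,b) = a∘(b⋄b†)`, and `λ(a,b) = σ(a,b)†⋄(a∘b)`, for every
idempotent `e` one has `λ(a, e⋄b) = λ(a,e) ⋄ λ(a,b)`. -/
theorem semiTruss_inverse_lambda_mult {A : Type*} (dia cir : A → A → A)
    (lam : A → A → A) (inv : A → A)
    (hdia_assoc : ∀ a b c : A, dia (dia a b) c = dia a (dia b c))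
    (hcir_assoc : ∀ a b c : A, cir (cir a b) c = cir a (cir b c))
    (hinv1 : ∀ a : A, dia (dia a (inv a)) a = a)
    (hinv2 : ∀ a : A, dia (dia (inv a) a) (inv a) = inv a)
    (huniq : ∀ a x : A, dia (dia a x) a = a → dia (dia x a) x = x → x = inv a)
    (hlaw : ∀ a b c : A, cir a (dia b c) = dia (cir a b) (lam a c))
    (hlam : ∀ a b : A, lam a b = dia (inv (cir a (dia b (inv b)))) (cir a b)) :
    ∀ a b e : A, dia e e = e → lam a (dia e b) = dia (lam a e) (lam a b) := by
  intro a b e he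
  have hbi : dia (dia b (inv b)) (dia b (inv b)) = dia b (inv b) :=
    st_idem_mi dia inv hdia_assoc hinv1 b
  have hie : inv e = e := st_inv_idem dia inv huniq he
  -- λ(a,e) = (a∘e)† ⋄ (a∘e)
  have hlae : lam a e = dia (inv (cir a e)) (cir a e) := by
    have h := hlam a e
    rw [hie, he] at h
    exact h
  have hinv_bb : inv (dia b (inv b)) = dia b (inv b) :=
    st_inv_idem dia inv huniq hbi
  -- λ(a, b⋄b†) = S† ⋄ S where S = a∘(b⋄b†)
  have hlabb : lam a (dia b (inv b))
      = dia (inv (cir a (dia b (inv b)))) (cir a (dia b (inv b))) := by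
    have h := hlam a (dia b (inv b))
    rw [hinv_bb, hbi] at h
    exact h
  -- a∘b = S ⋄ λ(a,b)
  have hab : cir a b = dia (cir a (dia b (inv b))) (lam a b) := by
    conv_lhs => rw [← hinv1 b]
    rw [hlaw]
  -- λ(a,b) = (S†⋄S) ⋄ λ(a,b)
  have habs : lam a b
      = dia (dia (inv (cir a (dia b (inv b)))) (cir a (dia b (inv b)))) (lam a b) := by
    rw [hdia_assoc, ← hab, ← hlam]
  -- (e⋄b)⋄(e⋄b)† = e ⋄ (b⋄b†)
  have hinv_eb : inv (dia e b) = dia (inv b) e := by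
    rw [st_inv_mul dia inv hdia_assoc hinv1 hinv2 huniq, hie]
  have comm_be : dia (dia b (inv b)) e = dia e (dia b (inv b)) :=
    st_idem_comm dia inv hdia_assoc hinv1 hinv2 huniq hbi he
  have heb : dia (dia e b) (inv (dia e b)) = dia e (dia b (inv b)) := by
    rw [hinv_eb]
    calc dia (dia e b) (dia (inv b) e) = dia e (dia (dia b (inv b)) e) := by
          simp only [hdia_assoc]
      _ = dia e (dia e (dia b (inv b))) := by rw [comm_be]
      _ = dia (dia e e) (dia b (inv b)) := by rw [hdia_assoc]
      _ = dia e (dia b (inv b)) := by rw [he]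
  -- σ(a, e⋄b) = P ⋄ (S†⋄S)
  have hsig : cir a (dia (dia e b) (inv (dia e b)))
      = dia (cir a e) (lam a (dia b (inv b))) := by
    rw [heb, hlaw]
  -- expand λ(a, e⋄b)
  have hlhs : lam a (dia e b)
      = dia (inv (dia (cir a e)
          (dia (inv (cir a (dia b (inv b)))) (cir a (dia b (inv b))))))
        (dia (cir a e) (lam a b)) := by
    rw [hlam, hsig, hlaw a e b, hlabb]
  have hSi : dia (dia (inv (cir a (dia b (inv b)))) (cir a (dia b (inv b))))
      (dia (inv (cir a (dia b (inv b)))) (cir a (dia b (inv b))))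
      = dia (inv (cir a (dia b (inv b)))) (cir a (dia b (inv b))) :=
    st_idem_ii dia inv hdia_assoc hinv2 (cir a (dia b (inv b)))
  have hPi : dia (dia (inv (cir a e)) (cir a e)) (dia (inv (cir a e)) (cir a e))
      = dia (inv (cir a e)) (cir a e) :=
    st_idem_ii dia inv hdia_assoc hinv2 (cir a e)
  have hinvSS : inv (dia (inv (cir a (dia b (inv b)))) (cir a (dia b (inv b))))
      = dia (inv (cir a (dia b (inv b)))) (cir a (dia b (inv b))) :=
    st_inv_idem dia inv huniq hSi
  have hinv_big : inv (dia (cir a e)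
      (dia (inv (cir a (dia b (inv b)))) (cir a (dia b (inv b)))))
      = dia (dia (inv (cir a (dia b (inv b)))) (cir a (dia b (inv b))))
        (inv (cir a e)) := by
    rw [st_inv_mul dia inv hdia_assoc hinv1 hinv2 huniq, hinvSS]
  have comm2 : dia (dia (inv (cir a (dia b (inv b)))) (cir a (dia b (inv b))))
      (dia (inv (cir a e)) (cir a e))
      = dia (dia (inv (cir a e)) (cir a e))
        (dia (inv (cir a (dia b (inv b)))) (cir a (dia b (inv b)))) :=
    st_idem_comm dia inv hdia_assoc hinv1 hinv2 huniq hSi hPi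
  rw [hlhs, hinv_big, hlae]
  conv_rhs => rw [habs]
  calc dia (dia (dia (inv (cir a (dia b (inv b)))) (cir a (dia b (inv b))))
          (inv (cir a e))) (dia (cir a e) (lam a b))
      = dia (dia (dia (inv (cir a (dia b (inv b)))) (cir a (dia b (inv b))))
          (dia (inv (cir a e)) (cir a e))) (lam a b) := by
        simp only [hdia_assoc]
    _ = dia (dia (dia (inv (cir a e)) (cir a e))
          (dia (inv (cir a (dia b (inv b)))) (cir a (dia b (inv b))))) (lam a b) := by
        rw [comm2]
    _ = dia (dia (inv (cir a e)) (cir a e))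
          (dia (dia (inv (cir a (dia b (inv b)))) (cir a (dia b (inv b)))) (lam a b)) := by
        simp only [hdia_assoc]
end
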